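/- In the free group on x_1,...,x_{s-1}, for 2 ≤ i, k ≤ s-1 and n ≥ 1, working modulo the commutator subgroup R' of R (the kernel of the winding number map), one has x_k^n x_i x_k^{-n} x_1^{-1} ≡ β_i^{t^n} · β_k^{1 - t^n}, where β_j = x_j x_1^{-1} and the exponent notation denotes the ℤ[t,t^{-1}]-module action by conjugation by x_1 on R/R'. -/

import Mathlib

/-!
Pass to `F ⧸ ⁅R, R⁆` for the free group `F`; there the image `K` of `R` is an abelian normal
subgroup. Writing `a = u c` with `u ∈ K`, conjugation by `a` acts on `K` as conjugation by `c`,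
since `u` commutes with `K`. Hence, for `w n = aⁿ b a⁻ⁿ c⁻¹` with `a, b ≡ c` modulo `K`, in the
additive notation of the `ℤ[t, t⁻¹]`-module `K` with `t` acting as conjugation by `c`, one has
`w 0 = b c⁻¹` and `w (n + 1) = t • w n + (1 - t) • (a c⁻¹)`, so that
`w n = tⁿ • (b c⁻¹) + (1 - tⁿ) • (a c⁻¹)`. Apply this with `a = x_k`, `b = x_i`, `c = x₁`.
-/

namespace Subgroup

variable {Q : Type*} [Group Q] {K : Subgroup Q}

theorem conj_eq_conj_of_mul_inv_mem [K.Normal] [IsMulCommutative K] {a c x : Q}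
    (ha : a * c⁻¹ ∈ K) (hx : x ∈ K) : a * x * a⁻¹ = c * x * c⁻¹ := by
  have hcx : c * x * c⁻¹ ∈ K := ‹K.Normal›.conj_mem x hx c
  calc a * x * a⁻¹ = a * c⁻¹ * (c * x * c⁻¹) * (a * c⁻¹)⁻¹ := by group
    _ = c * x * c⁻¹ := by rw [setLike_mul_comm ha hcx, mul_inv_cancel_right]

theorem pow_conj_mul_inv_eq [K.Normal] [IsMulCommutative K] {a b c : Q}
    (ha : a * c⁻¹ ∈ K) (hb : b * c⁻¹ ∈ K) (n : ℕ) :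
    a ^ n * b * (a ^ n)⁻¹ * c⁻¹ =
      c ^ n * (b * c⁻¹) * (c ^ n)⁻¹ * (a * c⁻¹) * (c ^ n * (a * c⁻¹) * (c ^ n)⁻¹)⁻¹ := by
  have hconj (g : Q) {x : Q} (hx : x ∈ K) : g * x * g⁻¹ ∈ K := ‹K.Normal›.conj_mem x hx g
  induction n with
  | zero => group
  | succ n ih =>
    have hw : a ^ n * b * (a ^ n)⁻¹ * c⁻¹ ∈ K :=
      ih ▸ mul_mem (mul_mem (hconj _ hb) ha) (inv_mem (hconj _ ha))
    have hmem : (c ^ (n + 1) * (a * c⁻¹) * (c ^ (n + 1))⁻¹)⁻¹ * (a * c⁻¹) ∈ K :=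
      mul_mem (inv_mem (hconj _ ha)) ha
    calc a ^ (n + 1) * b * (a ^ (n + 1))⁻¹ * c⁻¹
        = a * (a ^ n * b * (a ^ n)⁻¹ * c⁻¹) * a⁻¹ * (a * c⁻¹ * (c * (a * c⁻¹) * c⁻¹)⁻¹) := by
          group
      _ = c * (a ^ n * b * (a ^ n)⁻¹ * c⁻¹) * c⁻¹ * (a * c⁻¹ * (c * (a * c⁻¹) * c⁻¹)⁻¹) := by
          rw [conj_eq_conj_of_mul_inv_mem ha hw]
      _ = c ^ (n + 1) * (b * c⁻¹) * (c ^ (n + 1))⁻¹ * (c * (a * c⁻¹) * c⁻¹ *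
            ((c ^ (n + 1) * (a * c⁻¹) * (c ^ (n + 1))⁻¹)⁻¹ * (a * c⁻¹)) *
              (c * (a * c⁻¹) * c⁻¹)⁻¹) := by
          rw [ih]; group
      _ = c ^ (n + 1) * (b * c⁻¹) * (c ^ (n + 1))⁻¹ *
            ((c ^ (n + 1) * (a * c⁻¹) * (c ^ (n + 1))⁻¹)⁻¹ * (a * c⁻¹)) := by
          rw [setLike_mul_comm (hconj _ ha) hmem, mul_inv_cancel_right]
      _ = _ := by
          rw [setLike_mul_comm (inv_mem (hconj _ ha)) ha]; group

end Subgroup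

instance QuotientGroup.isMulCommutative_map_mk'_commutator {G : Type*} [Group G]
    (R : Subgroup G) [R.Normal] : IsMulCommutative (R.map (QuotientGroup.mk' ⁅R, R⁆)) := by
  refine ⟨⟨?_⟩⟩
  rintro ⟨_, u, hu, rfl⟩ ⟨_, v, hv, rfl⟩
  apply Subtype.ext
  show (u : G ⧸ ⁅R, R⁆) * v = v * u
  rw [← QuotientGroup.mk_mul, ← QuotientGroup.mk_mul, QuotientGroup.eq]
  simpa [commutatorElement_def, mul_assoc] using
    Subgroup.commutator_mem_commutator (inv_mem hv) (inv_mem hu)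

/-- In the free group on `x₁,…,x_{s-1}`, for indices `i, k` with
`2 ≤ i, k ≤ s-1` (i.e. `i, k ≠ ⟨0,_⟩`) and `n ≥ 1`, modulo the commutator subgroup `R'` of the
kernel `R` of the winding number map `α` one has
`x_k^n x_i x_k^{-n} x₁^{-1} ≡ β_i^{t^n} · β_k^{1-t^n}`, where `β_j = x_j x₁⁻¹` and `t` acts by
conjugation by `x₁`; multiplicatively the right-hand side is
`(x₁^n β_i x₁^{-n}) · β_k · (x₁^n β_k x₁^{-n})⁻¹`. -/
theorem stmt_13 (s : ℕ) (hs : 3 ≤ s) (n : ℕ)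
    (α : FreeGroup (Fin (s-1)) →* Multiplicative ℤ)
    (hα : ∀ i, α (FreeGroup.of i) = Multiplicative.ofAdd 1)
    (i k : Fin (s-1)) :
    (FreeGroup.of k ^ n * FreeGroup.of i * (FreeGroup.of k ^ n)⁻¹ *
        (FreeGroup.of (⟨0, by omega⟩ : Fin (s-1)))⁻¹) *
      ((FreeGroup.of (⟨0, by omega⟩ : Fin (s-1)) ^ n *
          (FreeGroup.of i * (FreeGroup.of (⟨0, by omega⟩ : Fin (s-1)))⁻¹) *
            (FreeGroup.of (⟨0, by omega⟩ : Fin (s-1)) ^ n)⁻¹) *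
        (FreeGroup.of k * (FreeGroup.of (⟨0, by omega⟩ : Fin (s-1)))⁻¹) *
        (FreeGroup.of (⟨0, by omega⟩ : Fin (s-1)) ^ n *
          (FreeGroup.of k * (FreeGroup.of (⟨0, by omega⟩ : Fin (s-1)))⁻¹) *
            (FreeGroup.of (⟨0, by omega⟩ : Fin (s-1)) ^ n)⁻¹)⁻¹)⁻¹ ∈
      Subgroup.map α.ker.subtype (commutator ↥α.ker) := by
  have hβ (j : Fin (s-1)) :
      QuotientGroup.mk' ⁅α.ker, α.ker⁆
          (FreeGroup.of j * (FreeGroup.of (⟨0, by omega⟩ : Fin (s-1)))⁻¹) ∈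
        α.ker.map (QuotientGroup.mk' ⁅α.ker, α.ker⁆) :=
    Subgroup.mem_map_of_mem _ (by simp [hα])
  rw [Subgroup.map_subtype_commutator, ← QuotientGroup.eq_one_iff, QuotientGroup.mk_mul,
    QuotientGroup.mk_inv, mul_inv_eq_one]
  simp only [QuotientGroup.mk_mul, QuotientGroup.mk_inv, QuotientGroup.mk_pow]
  exact Subgroup.pow_conj_mul_inv_eq (hβ k) (hβ i) n
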